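/- Assume the latent-variable Fisher information setup. Suppose there exists ν ∈ (0, 1/2] with δ/α ≤ 1 − 2ν, that μ(Ω)·ξ(T) ≤ (1/6)·(να/(β(2−ν)))², and that γ ∈ [3β(2−ν)ξ(T)/(να), να/(2β(2−ν)μ(Ω))]. Then for every nearby tangent space T′ (i.e., T′ = T(M′) for a symmetric M′ with rank(M′) = rank(L*) and ρ(T′,T) ≤ ξ(T)/2) and 𝒴 = Ω × T′, every (S,L) ∈ 𝒴 satisfies g_γ(𝒫_𝒴 𝒜† ℐ* 𝒜 𝒫_𝒴 (S,L)) ≥ (α/2)·g_γ(S,L). -/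

import Mathlib

open Matrix MeasureTheory
open scoped Classical

noncomputable section

namespace LVGGM

variable {p h : ℕ}

/-- Spectral norm (largest singular value) of a real square matrix. -/
def specNorm (M : Matrix (Fin p) (Fin p) ℝ) : ℝ :=
  ‖Matrix.toEuclideanCLM (𝕜 := ℝ) M‖

/-- Entrywise max norm `‖M‖_∞`. -/
def maxNorm (M : Matrix (Fin p) (Fin p) ℝ) : ℝ :=
  ⨆ i, ⨆ j, |M i j|

/-- Entrywise ℓ₁ norm `‖M‖₁`. -/
def l1Norm (M : Matrix (Fin p) (Fin p) ℝ) : ℝ :=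
  ∑ i, ∑ j, |M i j|

/-- The matrix of the orthogonal projection of ℝ^p onto the column space of `M`. -/
def colProj (M : Matrix (Fin p) (Fin p) ℝ) : Matrix (Fin p) (Fin p) ℝ :=
  LinearMap.toMatrix (EuclideanSpace.basisFun (Fin p) ℝ).toBasis
    (EuclideanSpace.basisFun (Fin p) ℝ).toBasis
    ((LinearMap.range (Matrix.toEuclideanLin M)).subtype ∘ₗ
      (LinearMap.range (Matrix.toEuclideanLin M)).orthogonalProjectionOnto.toLinearMap)

/-- Singular values of a matrix, as square roots of eigenvalues of `Mᴴ M`. -/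
def singVals (M : Matrix (Fin p) (Fin p) ℝ) (i : Fin p) : ℝ :=
  Real.sqrt ((Matrix.posSemidef_conjTranspose_mul_self M).1.eigenvalues i)

/-! ### Sparse tangent spaces -/

/-- Tangent space to the variety of sparse matrices at `M₀`. -/
def OmegaSet (M₀ : Matrix (Fin p) (Fin p) ℝ) : Set (Matrix (Fin p) (Fin p) ℝ) :=
  {N | ∀ i j, M₀ i j = 0 → N i j = 0}

/-- Orthogonal projection onto `OmegaSet M₀`. -/
def projOmega (M₀ N : Matrix (Fin p) (Fin p) ℝ) : Matrix (Fin p) (Fin p) ℝ :=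
  Matrix.of fun i j => if M₀ i j = 0 then 0 else N i j

/-- Orthogonal projection onto the orthogonal complement of `OmegaSet M₀`. -/
def projOmegaPerp (M₀ N : Matrix (Fin p) (Fin p) ℝ) : Matrix (Fin p) (Fin p) ℝ :=
  Matrix.of fun i j => if M₀ i j = 0 then N i j else 0

/-- `μ(Ω(M₀))`: max spectral norm over the `‖·‖_∞`-unit ball of `Ω(M₀)`. -/
def muOmega (M₀ : Matrix (Fin p) (Fin p) ℝ) : ℝ :=
  ⨆ N : {N : Matrix (Fin p) (Fin p) ℝ // N ∈ OmegaSet M₀ ∧ maxNorm N ≤ 1}, specNorm N.1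

/-! ### Low-rank tangent spaces (symmetric version) -/

/-- `𝒫_{T(M)}` for symmetric `M`: `N ↦ P N + N P − P N P` with `P` the column-space projector. -/
def projTsym (M N : Matrix (Fin p) (Fin p) ℝ) : Matrix (Fin p) (Fin p) ℝ :=
  colProj M * N + N * colProj M - colProj M * N * colProj M

/-- `𝒫_{T(M)^⊥}` for symmetric `M`: `N ↦ (I−P) N (I−P)`. -/
def projTsymPerp (M N : Matrix (Fin p) (Fin p) ℝ) : Matrix (Fin p) (Fin p) ℝ :=
  (1 - colProj M) * N * (1 - colProj M)

/-- Tangent space to the variety of symmetric low-rank matrices at symmetric `M`. -/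
def TsetSym (M : Matrix (Fin p) (Fin p) ℝ) : Set (Matrix (Fin p) (Fin p) ℝ) :=
  {N | N.IsHermitian ∧ projTsymPerp M N = 0}

/-- `ξ(T(M))` (symmetric version). -/
def xiT (M : Matrix (Fin p) (Fin p) ℝ) : ℝ :=
  ⨆ N : {N : Matrix (Fin p) (Fin p) ℝ // N ∈ TsetSym M ∧ specNorm N ≤ 1}, maxNorm N.1

/-- `ρ(T(M₁), T(M₂))` (symmetric version). -/
def rhoSym (M₁ M₂ : Matrix (Fin p) (Fin p) ℝ) : ℝ :=
  ⨆ N : {N : Matrix (Fin p) (Fin p) ℝ // specNorm N ≤ 1},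
    specNorm (projTsym M₁ N.1 - projTsym M₂ N.1)

/-! ### Low-rank tangent spaces (general version) -/

/-- `𝒫_{T(M)}` for general `M`: `N ↦ P_U N + N P_V − P_U N P_V`. -/
def projTgen (M N : Matrix (Fin p) (Fin p) ℝ) : Matrix (Fin p) (Fin p) ℝ :=
  colProj M * N + N * colProj Mᵀ - colProj M * N * colProj Mᵀ

/-- `𝒫_{T(M)^⊥}` for general `M`. -/
def projTgenPerp (M N : Matrix (Fin p) (Fin p) ℝ) : Matrix (Fin p) (Fin p) ℝ :=
  (1 - colProj M) * N * (1 - colProj Mᵀ)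

/-- Tangent space to the variety of low-rank matrices at a general matrix `M`. -/
def TsetGen (M : Matrix (Fin p) (Fin p) ℝ) : Set (Matrix (Fin p) (Fin p) ℝ) :=
  {N | projTgenPerp M N = 0}

/-- `ξ(T(M))` (general version). -/
def xiGen (M : Matrix (Fin p) (Fin p) ℝ) : ℝ :=
  ⨆ N : {N : Matrix (Fin p) (Fin p) ℝ // N ∈ TsetGen M ∧ specNorm N ≤ 1}, maxNorm N.1

/-- Euclidean norm of the `i`-th column of `P`, i.e. `‖P e_i‖`. -/
def colEucNorm (P : Matrix (Fin p) (Fin p) ℝ) (i : Fin p) : ℝ :=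
  Real.sqrt (∑ j, (P j i) ^ 2)

/-- Incoherence `inc(M)` of the row/column spaces of `M`. -/
def inc (M : Matrix (Fin p) (Fin p) ℝ) : ℝ :=
  max (⨆ i, colEucNorm (colProj M) i) (⨆ i, colEucNorm (colProj Mᵀ) i)

/-! ### Orthogonal projections onto arbitrary subspaces of matrices -/

/-- Matrices as vectors in the Euclidean space of entries (trace inner product). -/
def toELin : Matrix (Fin p) (Fin p) ℝ →ₗ[ℝ] EuclideanSpace ℝ (Fin p × Fin p) where
  toFun M := WithLp.toLp 2 (fun q : Fin p × Fin p => M q.1 q.2)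
  map_add' _ _ := rfl
  map_smul' _ _ := rfl

/-- Orthogonal projection (trace inner product) onto a subspace of matrices. -/
def matProj (T : Submodule ℝ (Matrix (Fin p) (Fin p) ℝ)) (N : Matrix (Fin p) (Fin p) ℝ) :
    Matrix (Fin p) (Fin p) ℝ :=
  Matrix.of fun i j => ((T.map toELin).orthogonalProjectionOnto (toELin N) : EuclideanSpace ℝ (Fin p × Fin p)) (i, j)

/-- `ρ(T₁,T₂)` for arbitrary subspaces of matrices. -/
def rhoSub (T₁ T₂ : Submodule ℝ (Matrix (Fin p) (Fin p) ℝ)) : ℝ :=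
  ⨆ N : {N : Matrix (Fin p) (Fin p) ℝ // specNorm N ≤ 1},
    specNorm (matProj T₁ N.1 - matProj T₂ N.1)

/-- `ξ(T)` for an arbitrary subspace of matrices. -/
def xiSub (T : Submodule ℝ (Matrix (Fin p) (Fin p) ℝ)) : ℝ :=
  ⨆ N : {N : Matrix (Fin p) (Fin p) ℝ // N ∈ T ∧ specNorm N ≤ 1}, maxNorm N.1

/-! ### The dual norm g_γ -/

/-- `g_γ(S,L) = max(‖S‖_∞/γ, ‖L‖₂)`. -/
def gNorm (γ : ℝ) (S L : Matrix (Fin p) (Fin p) ℝ) : ℝ :=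
  max (maxNorm S / γ) (specNorm L)

/-- `g_γ(𝒜†(M)) = max(‖M‖_∞/γ, ‖M‖₂)`. -/
def gA (γ : ℝ) (M : Matrix (Fin p) (Fin p) ℝ) : ℝ :=
  max (maxNorm M / γ) (specNorm M)

/-! ### Latent-variable Fisher information setup -/

/-- `S* = K*_O`. -/
def Sstar (K : Matrix (Fin p ⊕ Fin h) (Fin p ⊕ Fin h) ℝ) : Matrix (Fin p) (Fin p) ℝ :=
  K.toBlocks₁₁

/-- `L* = K*_{O,H} (K*_H)⁻¹ K*_{H,O}`. -/
def Lstar (K : Matrix (Fin p ⊕ Fin h) (Fin p ⊕ Fin h) ℝ) : Matrix (Fin p) (Fin p) ℝ :=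
  K.toBlocks₁₂ * (K.toBlocks₂₂)⁻¹ * K.toBlocks₂₁

/-- `K̃*_O = S* − L*` (Schur complement). -/
def KtildeO (K : Matrix (Fin p ⊕ Fin h) (Fin p ⊕ Fin h) ℝ) : Matrix (Fin p) (Fin p) ℝ :=
  Sstar K - Lstar K

/-- `Σ*_O = (K̃*_O)⁻¹`. -/
def SigmaO (K : Matrix (Fin p ⊕ Fin h) (Fin p ⊕ Fin h) ℝ) : Matrix (Fin p) (Fin p) ℝ :=
  (KtildeO K)⁻¹

/-- `ψ = ‖Σ*_O‖₂`. -/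
def psi (K : Matrix (Fin p ⊕ Fin h) (Fin p ⊕ Fin h) ℝ) : ℝ :=
  specNorm (SigmaO K)

/-- Fisher information operator `ℐ*(M) = Σ*_O M Σ*_O`. -/
def Istar (K : Matrix (Fin p ⊕ Fin h) (Fin p ⊕ Fin h) ℝ) (M : Matrix (Fin p) (Fin p) ℝ) :
    Matrix (Fin p) (Fin p) ℝ :=
  SigmaO K * M * SigmaO K

/-- A nearby tangent space: `T' = T(M')` for a symmetric `M'` with the same rank as `Lst`
and `ρ(T',T(Lst)) ≤ ξ(T(Lst))/2`. -/
def Nearby (Lst M' : Matrix (Fin p) (Fin p) ℝ) : Prop :=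
  M'.IsHermitian ∧ M'.rank = Lst.rank ∧ rhoSym M' Lst ≤ xiT Lst / 2

/-- `α_Ω`. -/
def alphaOmega (K : Matrix (Fin p ⊕ Fin h) (Fin p ⊕ Fin h) ℝ) : ℝ :=
  ⨅ M : {M : Matrix (Fin p) (Fin p) ℝ // M ∈ OmegaSet (Sstar K) ∧ maxNorm M = 1},
    maxNorm (projOmega (Sstar K) (Istar K (projOmega (Sstar K) M.1)))

/-- `δ_Ω`. -/
def deltaOmega (K : Matrix (Fin p ⊕ Fin h) (Fin p ⊕ Fin h) ℝ) : ℝ :=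
  ⨆ M : {M : Matrix (Fin p) (Fin p) ℝ // M ∈ OmegaSet (Sstar K) ∧ maxNorm M = 1},
    maxNorm (projOmegaPerp (Sstar K) (Istar K (projOmega (Sstar K) M.1)))

/-- `β_Ω`. -/
def betaOmega (K : Matrix (Fin p ⊕ Fin h) (Fin p ⊕ Fin h) ℝ) : ℝ :=
  ⨆ M : {M : Matrix (Fin p) (Fin p) ℝ // M ∈ OmegaSet (Sstar K) ∧ specNorm M = 1},
    specNorm (Istar K M.1)

/-- `α_T`. -/
def alphaTC (K : Matrix (Fin p ⊕ Fin h) (Fin p ⊕ Fin h) ℝ) : ℝ :=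
  ⨅ x : {x : Matrix (Fin p) (Fin p) ℝ × Matrix (Fin p) (Fin p) ℝ //
      Nearby (Lstar K) x.1 ∧ x.2 ∈ TsetSym x.1 ∧ specNorm x.2 = 1},
    specNorm (projTsym x.1.1 (Istar K (projTsym x.1.1 x.1.2)))

/-- `δ_T`. -/
def deltaTC (K : Matrix (Fin p ⊕ Fin h) (Fin p ⊕ Fin h) ℝ) : ℝ :=
  ⨆ x : {x : Matrix (Fin p) (Fin p) ℝ × Matrix (Fin p) (Fin p) ℝ //
      Nearby (Lstar K) x.1 ∧ x.2 ∈ TsetSym x.1 ∧ specNorm x.2 = 1},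
    specNorm (projTsymPerp x.1.1 (Istar K (projTsym x.1.1 x.1.2)))

/-- `β_T`. -/
def betaTC (K : Matrix (Fin p ⊕ Fin h) (Fin p ⊕ Fin h) ℝ) : ℝ :=
  ⨆ x : {x : Matrix (Fin p) (Fin p) ℝ × Matrix (Fin p) (Fin p) ℝ //
      Nearby (Lstar K) x.1 ∧ x.2 ∈ TsetSym x.1 ∧ maxNorm x.2 = 1},
    maxNorm (Istar K x.1.2)

/-- `α = min(α_Ω, α_T)`. -/
def alphaC (K : Matrix (Fin p ⊕ Fin h) (Fin p ⊕ Fin h) ℝ) : ℝ :=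
  min (alphaOmega K) (alphaTC K)

/-- `δ = max(δ_Ω, δ_T)`. -/
def deltaC (K : Matrix (Fin p ⊕ Fin h) (Fin p ⊕ Fin h) ℝ) : ℝ :=
  max (deltaOmega K) (deltaTC K)

/-- `β = max(β_Ω, β_T)`. -/
def betaC (K : Matrix (Fin p ⊕ Fin h) (Fin p ⊕ Fin h) ℝ) : ℝ :=
  max (betaOmega K) (betaTC K)

/-- The positive semidefinite square root of a positive semidefinite real matrix
(the former Mathlib `Matrix.PosSemidef.sqrt`). -/
def _root_.Matrix.PosSemidef.sqrt {n : Type*} [Fintype n] [DecidableEq n]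
    {A : Matrix n n ℝ} (hA : A.PosSemidef) : Matrix n n ℝ :=
  hA.1.eigenvectorUnitary.1 * Matrix.diagonal (fun i => Real.sqrt (hA.1.eigenvalues i)) *
    (star hA.1.eigenvectorUnitary : Matrix n n ℝ)

/-! ### Probability: iid Gaussian samples and sample covariance -/

/-- The joint law of `n` i.i.d. samples from `N(0, S)` on `ℝ^p`, realized by pushing forward
i.i.d. standard Gaussians through the positive-semidefinite square root of `S`. -/
def iidGaussian (n p : ℕ) (S : Matrix (Fin p) (Fin p) ℝ) : Measure (Fin n → Fin p → ℝ) :=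
  if hS : S.PosSemidef then
    (Measure.pi fun _ : Fin n => Measure.pi fun _ : Fin p =>
        ProbabilityTheory.gaussianReal 0 1).map
      (fun Z => fun i => hS.sqrt.mulVec (Z i))
  else 0

/-- Sample covariance matrix of samples `X 1, …, X n`. -/
def sampleCov {p n : ℕ} (X : Fin n → Fin p → ℝ) : Matrix (Fin p) (Fin p) ℝ :=
  (n : ℝ)⁻¹ • ∑ i, Matrix.vecMulVec (X i) (X i)

/-! ### Optimization programs -/

/-- Nuclear norm `‖M‖_*` (sum of singular values). -/
def nuclearNorm (M : Matrix (Fin p) (Fin p) ℝ) : ℝ :=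
  ((Matrix.posSemidef_conjTranspose_mul_self M).sqrt).trace

/-- Objective of the program (sdp1): `tr((S−L)Σ) − log det(S−L) + λ(γ‖S‖₁ + tr(L))`. -/
def objSDP1 (Sig : Matrix (Fin p) (Fin p) ℝ) (lam gam : ℝ)
    (S L : Matrix (Fin p) (Fin p) ℝ) : ℝ :=
  ((S - L) * Sig).trace - Real.log (S - L).det + lam * (gam * l1Norm S + L.trace)

/-- Feasibility for (sdp1): symmetric `S, L`, `S − L ≻ 0`, `L ⪰ 0`. -/
def FeasSDP1 (S L : Matrix (Fin p) (Fin p) ℝ) : Prop :=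
  S.IsHermitian ∧ L.IsHermitian ∧ (S - L).PosDef ∧ L.PosSemidef

/-- `(S,L)` is an optimum of the program (sdp1). -/
def IsOptSDP1 (Sig : Matrix (Fin p) (Fin p) ℝ) (lam gam : ℝ)
    (S L : Matrix (Fin p) (Fin p) ℝ) : Prop :=
  FeasSDP1 S L ∧ ∀ S' L', FeasSDP1 S' L' →
    objSDP1 Sig lam gam S L ≤ objSDP1 Sig lam gam S' L'

/-- Objective with the nuclear norm: `tr((S−L)Σ) − log det(S−L) + λ(γ‖S‖₁ + ‖L‖_*)`. -/
def objNuc (Sig : Matrix (Fin p) (Fin p) ℝ) (lam gam : ℝ)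
    (S L : Matrix (Fin p) (Fin p) ℝ) : ℝ :=
  ((S - L) * Sig).trace - Real.log (S - L).det + lam * (gam * l1Norm S + nuclearNorm L)

/-- Feasibility for the tangent-space constrained program: symmetric, `S ∈ Ω(Sst)`,
`L ∈ T(M')`, `S − L ≻ 0`. -/
def FeasTS (Sst M' : Matrix (Fin p) (Fin p) ℝ) (S L : Matrix (Fin p) (Fin p) ℝ) : Prop :=
  S.IsHermitian ∧ S ∈ OmegaSet Sst ∧ L ∈ TsetSym M' ∧ (S - L).PosDef

/-- Optimality for the tangent-space constrained program. -/
def IsOptTS (Sst M' Sig : Matrix (Fin p) (Fin p) ℝ) (lam gam : ℝ)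
    (S L : Matrix (Fin p) (Fin p) ℝ) : Prop :=
  FeasTS Sst M' S L ∧ ∀ S' L', FeasTS Sst M' S' L' →
    objNuc Sig lam gam S L ≤ objNuc Sig lam gam S' L'

/-- Feasibility for the unconstrained nuclear-norm program: symmetric, `S − L ≻ 0`. -/
def FeasSy (S L : Matrix (Fin p) (Fin p) ℝ) : Prop :=
  S.IsHermitian ∧ L.IsHermitian ∧ (S - L).PosDef

/-- Optimality for the unconstrained nuclear-norm program. -/
def IsOptSy (Sig : Matrix (Fin p) (Fin p) ℝ) (lam gam : ℝ)
    (S L : Matrix (Fin p) (Fin p) ℝ) : Prop :=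
  FeasSy S L ∧ ∀ S' L', FeasSy S' L' →
    objNuc Sig lam gam S L ≤ objNuc Sig lam gam S' L'

/-! ### Spectral projectors and inertia -/

/-- Orthogonal projection onto the direct sum of the eigenspaces of a symmetric matrix `A`
corresponding to eigenvalues of magnitude less than `η`. -/
def spectralProjLT (A : Matrix (Fin p) (Fin p) ℝ) (η : ℝ) : Matrix (Fin p) (Fin p) ℝ :=
  if hA : A.IsHermitian then
    ∑ i ∈ Finset.univ.filter (fun i => |hA.eigenvalues i| < η),
      Matrix.vecMulVec (fun j => hA.eigenvectorBasis i j) (fun j => hA.eigenvectorBasis i j)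
  else 0

/-- `t` is an eigenvalue of `A`. -/
def hasEigval (A : Matrix (Fin p) (Fin p) ℝ) (t : ℝ) : Prop :=
  ∃ v : Fin p → ℝ, v ≠ 0 ∧ A.mulVec v = t • v

/-- Inertia (numbers of positive, negative, and zero eigenvalues) of a symmetric matrix. -/
def inertia (M : Matrix (Fin p) (Fin p) ℝ) : ℕ × ℕ × ℕ :=
  if hM : M.IsHermitian then
    ((Finset.univ.filter fun i => 0 < hM.eigenvalues i).card,
     (Finset.univ.filter fun i => hM.eigenvalues i < 0).card,
     (Finset.univ.filter fun i => hM.eigenvalues i = 0).card)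
  else (0, 0, 0)

end LVGGM

/-!
On `Ω × T′` the operator `𝒫_𝒴 𝒜† ℐ* 𝒜 𝒫_𝒴` is block diagonal up to the cross terms `𝒫_Ω ℐ* L` and
`𝒫_{T′} ℐ* S`. The diagonal blocks gain at least `α`, each in its own norm, while the cross terms
are small: `‖𝒫_Ω ℐ* L‖∞ ≤ β ‖L‖∞ ≤ (5/2) β ξ(T) ‖L‖₂`, since a matrix of a nearby tangent space is
almost as incoherent as one of `T` (`ρ(T′,T) ≤ ξ(T)/2`), and `‖𝒫_{T′} ℐ* S‖₂ ≤ 2 β ‖S‖₂ ≤ 2 β μ(Ω) ‖S‖∞`.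
The two ends of the range of `γ` make each cross term at most half of the diagonal gain in whichever
component attains `g_γ`.
-/

namespace LVGGM

variable {p h : ℕ}

section Normalization

variable {ι : Type*} {F : ι → ℝ} {a c : ℝ}

lemma le_ciSup_mul_of_scaled (hF : BddAbove (Set.range F)) (hc : 0 ≤ c)
    (hzero : c = 0 → a ≤ 0) (hscaled : 0 < c → ∃ i, F i = c⁻¹ * a) :
    a ≤ (⨆ i, F i) * c := by
  rcases hc.eq_or_lt with rfl | hc
  · simpa using hzero rfl
  obtain ⟨i, hi⟩ := hscaled hc
  calc a = F i * c := by rw [hi]; field_simp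
    _ ≤ (⨆ i, F i) * c := by gcongr; exact le_ciSup hF i

lemma ciInf_mul_le_of_scaled (hF : BddBelow (Set.range F)) (hc : 0 ≤ c)
    (hzero : c = 0 → 0 ≤ a) (hscaled : 0 < c → ∃ i, F i = c⁻¹ * a) :
    (⨅ i, F i) * c ≤ a := by
  rcases hc.eq_or_lt with rfl | hc
  · simpa using hzero rfl
  obtain ⟨i, hi⟩ := hscaled hc
  calc (⨅ i, F i) * c ≤ F i * c := by gcongr; exact ciInf_le hF i
    _ = a := by rw [hi]; field_simp

end Normalization

section EntrywiseNorm

open scoped Matrix.Norms.Elementwise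

variable (M N : Matrix (Fin p) (Fin p) ℝ)

lemma maxNorm_eq_norm : maxNorm M = ‖M‖ := by
  have hsup : 0 ≤ maxNorm M := Real.iSup_nonneg fun _ => Real.iSup_nonneg fun _ => abs_nonneg _
  refine le_antisymm ?_ ((Matrix.norm_le_iff hsup).2 fun i j => ?_)
  · exact Real.iSup_le (fun i => Real.iSup_le (fun j => Matrix.norm_entry_le_entrywise_sup_norm M)
      (norm_nonneg _)) (norm_nonneg _)
  · exact (le_ciSup (Set.finite_range _).bddAbove j).trans
      (le_ciSup (f := fun i => ⨆ j, |M i j|) (Set.finite_range _).bddAbove i)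

lemma maxNorm_nonneg : 0 ≤ maxNorm M := by
  rw [maxNorm_eq_norm]; exact norm_nonneg M

lemma abs_le_maxNorm (i j : Fin p) : |M i j| ≤ maxNorm M := by
  rw [maxNorm_eq_norm]; exact Matrix.norm_entry_le_entrywise_sup_norm M

lemma maxNorm_le_of_forall_abs_le {r : ℝ} (hr : 0 ≤ r) (hM : ∀ i j, |M i j| ≤ r) :
    maxNorm M ≤ r := by
  rw [maxNorm_eq_norm]; exact (Matrix.norm_le_iff hr).2 hM

lemma maxNorm_add_le : maxNorm (M + N) ≤ maxNorm M + maxNorm N := by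
  simp only [maxNorm_eq_norm]; exact norm_add_le M N

lemma maxNorm_sub_le_maxNorm_add : maxNorm M - maxNorm N ≤ maxNorm (M + N) := by
  simpa only [maxNorm_eq_norm, norm_neg, sub_neg_eq_add] using norm_sub_norm_le M (-N)

lemma maxNorm_smul (t : ℝ) : maxNorm (t • M) = |t| * maxNorm M := by
  simp only [maxNorm_eq_norm, norm_smul, Real.norm_eq_abs]

lemma maxNorm_eq_zero : maxNorm M = 0 ↔ M = 0 := by
  rw [maxNorm_eq_norm, norm_eq_zero]

@[simp]
lemma maxNorm_zero : maxNorm (0 : Matrix (Fin p) (Fin p) ℝ) = 0 :=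
  (maxNorm_eq_zero 0).2 rfl

end EntrywiseNorm

lemma maxNorm_inv_smul_self {N : Matrix (Fin p) (Fin p) ℝ} (hN : 0 < maxNorm N) :
    maxNorm ((maxNorm N)⁻¹ • N) = 1 := by
  rw [maxNorm_smul, abs_of_pos (inv_pos.2 hN), inv_mul_cancel₀ hN.ne']

section SpectralNorm

open scoped Matrix.Norms.L2Operator

variable (M N : Matrix (Fin p) (Fin p) ℝ)

lemma specNorm_eq_norm : specNorm M = ‖M‖ := rfl

lemma specNorm_nonneg : 0 ≤ specNorm M := norm_nonneg M

lemma specNorm_add_le : specNorm (M + N) ≤ specNorm M + specNorm N := norm_add_le M N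

lemma specNorm_sub_le : specNorm (M - N) ≤ specNorm M + specNorm N := norm_sub_le M N

lemma specNorm_sub_le_specNorm_add : specNorm M - specNorm N ≤ specNorm (M + N) := by
  simpa only [specNorm_eq_norm, norm_neg, sub_neg_eq_add] using norm_sub_norm_le M (-N)

lemma specNorm_mul_le : specNorm (M * N) ≤ specNorm M * specNorm N := norm_mul_le M N

lemma specNorm_smul (t : ℝ) : specNorm (t • M) = |t| * specNorm M := by
  simp only [specNorm_eq_norm, norm_smul, Real.norm_eq_abs]

lemma specNorm_eq_zero : specNorm M = 0 ↔ M = 0 := by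
  rw [specNorm_eq_norm, norm_eq_zero]

@[simp]
lemma specNorm_zero : specNorm (0 : Matrix (Fin p) (Fin p) ℝ) = 0 :=
  (specNorm_eq_zero 0).2 rfl

open scoped RealInnerProductSpace in
lemma abs_le_specNorm (i j : Fin p) : |M i j| ≤ specNorm M := by
  have hentry : ⟪EuclideanSpace.single i 1, Matrix.toEuclideanCLM (𝕜 := ℝ) M
      (EuclideanSpace.single j 1)⟫ = M i j := by
    simp [Matrix.inner_toEuclideanCLM, Matrix.mulVec_single]
  rw [← hentry]
  calc _ ≤ ‖EuclideanSpace.single i (1 : ℝ)‖ *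
        ‖Matrix.toEuclideanCLM (𝕜 := ℝ) M (EuclideanSpace.single j 1)‖ :=
        abs_real_inner_le_norm _ _
    _ ≤ ‖Matrix.toEuclideanCLM (𝕜 := ℝ) M‖ := by
        simpa using (Matrix.toEuclideanCLM (𝕜 := ℝ) M).le_opNorm (EuclideanSpace.single j 1)

lemma maxNorm_le_specNorm : maxNorm M ≤ specNorm M :=
  maxNorm_le_of_forall_abs_le M (specNorm_nonneg M) (abs_le_specNorm M)

lemma exists_specNorm_le_mul_maxNorm :
    ∃ C, 0 ≤ C ∧ ∀ M : Matrix (Fin p) (Fin p) ℝ, specNorm M ≤ C * maxNorm M := by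
  refine ⟨∑ i, ∑ j, specNorm (Matrix.single i j 1 : Matrix (Fin p) (Fin p) ℝ),
    Finset.sum_nonneg fun _ _ => Finset.sum_nonneg fun _ _ => specNorm_nonneg _, fun M => ?_⟩
  conv_lhs => rw [Matrix.matrix_eq_sum_single M]
  simp only [specNorm_eq_norm, Finset.sum_mul]
  refine (norm_sum_le _ _).trans (Finset.sum_le_sum fun i _ => (norm_sum_le _ _).trans
    (Finset.sum_le_sum fun j _ => ?_))
  rw [show Matrix.single i j (M i j) = M i j • Matrix.single i j 1 by
    rw [Matrix.smul_single, smul_eq_mul, mul_one], norm_smul, Real.norm_eq_abs, mul_comm]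
  exact mul_le_mul_of_nonneg_left (abs_le_maxNorm M i j) (norm_nonneg _)

lemma toEuclideanCLM_colProj :
    Matrix.toEuclideanCLM (𝕜 := ℝ) (colProj M) =
      (LinearMap.range (Matrix.toEuclideanLin M)).starProjection := by
  ext x i
  exact congrFun (LinearMap.toMatrix_mulVec_repr (EuclideanSpace.basisFun (Fin p) ℝ).toBasis
    (EuclideanSpace.basisFun (Fin p) ℝ).toBasis _ x) i

lemma colProj_mul_self : colProj M * colProj M = colProj M :=
  EquivLike.injective (Matrix.toEuclideanCLM (𝕜 := ℝ)) <| by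
    rw [map_mul, toEuclideanCLM_colProj]
    exact (Submodule.isIdempotentElem_starProjection _).eq

lemma colProj_isHermitian : (colProj M).IsHermitian :=
  EquivLike.injective (Matrix.toEuclideanCLM (𝕜 := ℝ)) <| by
    rw [← Matrix.star_eq_conjTranspose, map_star, toEuclideanCLM_colProj]
    exact (isSelfAdjoint_starProjection _).star_eq

lemma specNorm_colProj_le_one : specNorm (colProj M) ≤ 1 := by
  rw [specNorm_eq_norm, Matrix.cstar_norm_def, toEuclideanCLM_colProj]
  exact Submodule.starProjection_norm_le _

lemma specNorm_one_sub_colProj_le_one : specNorm (1 - colProj M) ≤ 1 := by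
  rw [specNorm_eq_norm, Matrix.cstar_norm_def, map_sub, map_one, toEuclideanCLM_colProj,
    ← Submodule.starProjection_orthogonal']
  exact Submodule.starProjection_norm_le _

end SpectralNorm

lemma specNorm_inv_smul_self {N : Matrix (Fin p) (Fin p) ℝ} (hN : 0 < specNorm N) :
    specNorm ((specNorm N)⁻¹ • N) = 1 := by
  rw [specNorm_smul, abs_of_pos (inv_pos.2 hN), inv_mul_cancel₀ hN.ne']

section Projections

variable (M₀ M A B : Matrix (Fin p) (Fin p) ℝ) (t : ℝ)

lemma OmegaSet_smul {N : Matrix (Fin p) (Fin p) ℝ} (hN : N ∈ OmegaSet M₀) :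
    t • N ∈ OmegaSet M₀ := fun i j hij => by simp [hN i j hij]

lemma projOmega_eq_self {N : Matrix (Fin p) (Fin p) ℝ} (hN : N ∈ OmegaSet M₀) :
    projOmega M₀ N = N := by
  ext i j
  by_cases hij : M₀ i j = 0 <;> simp [projOmega, hij, hN i j]

lemma projOmega_add : projOmega M₀ (A + B) = projOmega M₀ A + projOmega M₀ B := by
  ext i j
  by_cases hij : M₀ i j = 0 <;> simp [projOmega, hij]

lemma projOmega_smul : projOmega M₀ (t • A) = t • projOmega M₀ A := by
  ext i j
  by_cases hij : M₀ i j = 0 <;> simp [projOmega, hij]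

lemma maxNorm_projOmega_le : maxNorm (projOmega M₀ A) ≤ maxNorm A := by
  refine maxNorm_le_of_forall_abs_le _ (maxNorm_nonneg A) fun i j => ?_
  by_cases hij : M₀ i j = 0
  · simpa [projOmega, hij] using maxNorm_nonneg A
  · simpa [projOmega, hij] using abs_le_maxNorm A i j

lemma TsetSym_smul {N : Matrix (Fin p) (Fin p) ℝ} (hN : N ∈ TsetSym M) :
    t • N ∈ TsetSym M := by
  refine ⟨hN.1.smul (IsSelfAdjoint.all t), ?_⟩
  rw [projTsymPerp, mul_smul_comm, smul_mul_assoc, ← projTsymPerp, hN.2, smul_zero]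

lemma projTsym_add : projTsym M (A + B) = projTsym M A + projTsym M B := by
  unfold projTsym; noncomm_ring

lemma projTsym_smul : projTsym M (t • A) = t • projTsym M A := by
  simp only [projTsym, mul_smul_comm, smul_mul_assoc, smul_add, smul_sub]

lemma projTsym_eq_self {N : Matrix (Fin p) (Fin p) ℝ} (hN : N ∈ TsetSym M) :
    projTsym M N = N := by
  have hperp : N - projTsym M N = projTsymPerp M N := by
    unfold projTsym projTsymPerp; noncomm_ring
  rw [hN.2, sub_eq_zero] at hperp
  exact hperp.symm

lemma projTsym_mem {N : Matrix (Fin p) (Fin p) ℝ} (hN : N.IsHermitian) :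
    projTsym M N ∈ TsetSym M := by
  refine ⟨?_, ?_⟩
  · unfold Matrix.IsHermitian projTsym
    simp only [Matrix.conjTranspose_sub, Matrix.conjTranspose_add, Matrix.conjTranspose_mul,
      (colProj_isHermitian M).eq, hN.eq]
    noncomm_ring
  · set P := colProj M
    have hP : P * P = P := colProj_mul_self M
    have hleft : (1 - P) * P = 0 := by rw [sub_mul, one_mul, hP, sub_self]
    have hright : P * (1 - P) = 0 := by rw [mul_sub, mul_one, hP, sub_self]
    calc projTsymPerp M (projTsym M N)
        = ((1 - P) * P) * (N * (1 - P)) + ((1 - P) * N) * (P * (1 - P))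
          - ((1 - P) * P) * ((N * P) * (1 - P)) := by
          unfold projTsymPerp projTsym; noncomm_ring
      _ = 0 := by rw [hleft, hright]; simp

lemma specNorm_projTsym_le : specNorm (projTsym M A) ≤ 2 * specNorm A := by
  set P := colProj M
  have hsplit : projTsym M A = P * A + (1 - P) * (A * P) := by
    unfold projTsym; noncomm_ring
  have hPA : specNorm (P * A) ≤ specNorm A :=
    (specNorm_mul_le _ _).trans (mul_le_of_le_one_left (specNorm_nonneg A)
      (specNorm_colProj_le_one M))
  have hAP : specNorm (A * P) ≤ specNorm A :=
    (specNorm_mul_le _ _).trans (mul_le_of_le_one_right (specNorm_nonneg A)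
      (specNorm_colProj_le_one M))
  have hQAP : specNorm ((1 - P) * (A * P)) ≤ specNorm A :=
    (specNorm_mul_le _ _).trans (mul_le_of_le_one_left (specNorm_nonneg _)
      (specNorm_one_sub_colProj_le_one M)) |>.trans hAP
  rw [hsplit]
  linarith [specNorm_add_le (P * A) ((1 - P) * (A * P))]

end Projections

section FisherInformation

variable (K : Matrix (Fin p ⊕ Fin h) (Fin p ⊕ Fin h) ℝ) (A B : Matrix (Fin p) (Fin p) ℝ)

lemma Istar_add : Istar K (A + B) = Istar K A + Istar K B := by
  unfold Istar; noncomm_ring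

lemma Istar_smul (t : ℝ) : Istar K (t • A) = t • Istar K A := by
  unfold Istar; rw [mul_smul_comm, smul_mul_assoc]

lemma specNorm_Istar_le : specNorm (Istar K A) ≤ psi K ^ 2 * specNorm A := by
  unfold Istar psi
  calc specNorm (SigmaO K * A * SigmaO K)
      ≤ specNorm (SigmaO K) * specNorm A * specNorm (SigmaO K) :=
        (specNorm_mul_le _ _).trans (by gcongr; exacts [specNorm_nonneg _, specNorm_mul_le _ _])
    _ = specNorm (SigmaO K) ^ 2 * specNorm A := by ring

end FisherInformation

section Constants

variable (K : Matrix (Fin p ⊕ Fin h) (Fin p ⊕ Fin h) ℝ) {M' S L : Matrix (Fin p) (Fin p) ℝ}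

lemma betaC_nonneg : 0 ≤ betaC K :=
  (Real.iSup_nonneg fun _ => specNorm_nonneg _).trans (le_max_left _ _)

lemma alphaOmega_mul_le (hS : S ∈ OmegaSet (Sstar K)) :
    alphaOmega K * maxNorm S ≤ maxNorm (projOmega (Sstar K) (Istar K S)) := by
  refine ciInf_mul_le_of_scaled ⟨0, ?_⟩ (maxNorm_nonneg S) (fun _ => maxNorm_nonneg _)
    fun hc => ?_
  · rintro _ ⟨_, rfl⟩; exact maxNorm_nonneg _
  have hmem := OmegaSet_smul (Sstar K) (maxNorm S)⁻¹ hS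
  refine ⟨⟨_, hmem, maxNorm_inv_smul_self hc⟩, ?_⟩
  simp only [projOmega_eq_self _ hmem, Istar_smul, projOmega_smul, maxNorm_smul,
    abs_of_pos (inv_pos.2 hc)]

lemma alphaTC_mul_le (hM' : Nearby (Lstar K) M') (hL : L ∈ TsetSym M') :
    alphaTC K * specNorm L ≤ specNorm (projTsym M' (Istar K L)) := by
  refine ciInf_mul_le_of_scaled ⟨0, ?_⟩ (specNorm_nonneg L) (fun _ => specNorm_nonneg _)
    fun hc => ?_
  · rintro _ ⟨_, rfl⟩; exact specNorm_nonneg _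
  have hmem := TsetSym_smul M' (specNorm L)⁻¹ hL
  refine ⟨⟨(M', _), hM', hmem, specNorm_inv_smul_self hc⟩, ?_⟩
  simp only [projTsym_eq_self _ hmem, Istar_smul, projTsym_smul, specNorm_smul,
    abs_of_pos (inv_pos.2 hc)]

lemma specNorm_Istar_le_betaOmega (hS : S ∈ OmegaSet (Sstar K)) :
    specNorm (Istar K S) ≤ betaOmega K * specNorm S := by
  refine le_ciSup_mul_of_scaled ⟨psi K ^ 2, ?_⟩ (specNorm_nonneg S) (fun h0 => ?_) fun hc => ?_
  · rintro _ ⟨N, rfl⟩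
    simpa [N.2.2] using specNorm_Istar_le K N.1
  · simpa [h0] using specNorm_Istar_le K S
  · exact ⟨⟨_, OmegaSet_smul (Sstar K) _ hS, specNorm_inv_smul_self hc⟩, by
      simp only [Istar_smul, specNorm_smul, abs_of_pos (inv_pos.2 hc)]⟩

lemma maxNorm_Istar_le_betaTC (hM' : Nearby (Lstar K) M') (hL : L ∈ TsetSym M') :
    maxNorm (Istar K L) ≤ betaTC K * maxNorm L := by
  obtain ⟨C, hC, hspec⟩ := exists_specNorm_le_mul_maxNorm (p := p)
  refine le_ciSup_mul_of_scaled ⟨psi K ^ 2 * C, ?_⟩ (maxNorm_nonneg L) (fun h0 => ?_)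
    fun hc => ?_
  · rintro _ ⟨x, rfl⟩
    calc maxNorm (Istar K x.1.2) ≤ psi K ^ 2 * specNorm x.1.2 :=
          (maxNorm_le_specNorm _).trans (specNorm_Istar_le K _)
      _ ≤ psi K ^ 2 * (C * maxNorm x.1.2) := by gcongr; exact hspec _
      _ = psi K ^ 2 * C := by rw [x.2.2.2, mul_one]
  · simp [(maxNorm_eq_zero L).1 h0, Istar]
  · exact ⟨⟨(M', _), hM', TsetSym_smul M' _ hL, maxNorm_inv_smul_self hc⟩, by
      simp only [Istar_smul, maxNorm_smul, abs_of_pos (inv_pos.2 hc)]⟩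

end Constants

section Incoherence

variable {M₀ M N : Matrix (Fin p) (Fin p) ℝ}

lemma xiT_nonneg (M : Matrix (Fin p) (Fin p) ℝ) : 0 ≤ xiT M :=
  Real.iSup_nonneg fun _ => maxNorm_nonneg _

lemma muOmega_nonneg (M₀ : Matrix (Fin p) (Fin p) ℝ) : 0 ≤ muOmega M₀ :=
  Real.iSup_nonneg fun _ => specNorm_nonneg _

lemma specNorm_le_muOmega (hN : N ∈ OmegaSet M₀) : specNorm N ≤ muOmega M₀ * maxNorm N := by
  obtain ⟨C, hC, hspec⟩ := exists_specNorm_le_mul_maxNorm (p := p)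
  refine le_ciSup_mul_of_scaled ⟨C, ?_⟩ (maxNorm_nonneg N) (fun h0 => ?_) fun hc => ?_
  · rintro _ ⟨x, rfl⟩
    exact (hspec x.1).trans (mul_le_of_le_one_right hC x.2.2)
  · simp [(maxNorm_eq_zero N).1 h0]
  · exact ⟨⟨_, OmegaSet_smul M₀ _ hN, (maxNorm_inv_smul_self hc).le⟩, by
      simp only [specNorm_smul, abs_of_pos (inv_pos.2 hc)]⟩

lemma maxNorm_le_xiT (hN : N ∈ TsetSym M) : maxNorm N ≤ xiT M * specNorm N := by
  refine le_ciSup_mul_of_scaled ⟨1, ?_⟩ (specNorm_nonneg N) (fun h0 => ?_) fun hc => ?_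
  · rintro _ ⟨x, rfl⟩
    exact (maxNorm_le_specNorm x.1).trans x.2.2
  · simp [(specNorm_eq_zero N).1 h0]
  · exact ⟨⟨_, TsetSym_smul M _ hN, (specNorm_inv_smul_self hc).le⟩, by
      simp only [maxNorm_smul, abs_of_pos (inv_pos.2 hc)]⟩

lemma specNorm_projTsym_sub_le_rhoSym (M₁ M₂ N : Matrix (Fin p) (Fin p) ℝ) :
    specNorm (projTsym M₁ N - projTsym M₂ N) ≤ rhoSym M₁ M₂ * specNorm N := by
  refine le_ciSup_mul_of_scaled ⟨4, ?_⟩ (specNorm_nonneg N) (fun h0 => ?_) fun hc => ?_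
  · rintro _ ⟨x, rfl⟩
    linarith [specNorm_sub_le (projTsym M₁ x.1) (projTsym M₂ x.1),
      specNorm_projTsym_le M₁ x.1, specNorm_projTsym_le M₂ x.1, x.2]
  · simp [(specNorm_eq_zero N).1 h0, projTsym]
  · exact ⟨⟨_, (specNorm_inv_smul_self hc).le⟩, by
      simp only [projTsym_smul, ← smul_sub, specNorm_smul, abs_of_pos (inv_pos.2 hc)]⟩

end Incoherence

lemma maxNorm_le_of_nearby {L₀ M' L : Matrix (Fin p) (Fin p) ℝ} (hM' : Nearby L₀ M')
    (hL : L ∈ TsetSym M') : maxNorm L ≤ 5 / 2 * xiT L₀ * specNorm L := by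
  have hsplit : L = projTsym L₀ L + (projTsym M' L - projTsym L₀ L) := by
    rw [projTsym_eq_self M' hL]; abel
  have hξ := xiT_nonneg L₀
  calc maxNorm L ≤ maxNorm (projTsym L₀ L) + maxNorm (projTsym M' L - projTsym L₀ L) := by
        conv_lhs => rw [hsplit]
        exact maxNorm_add_le _ _
    _ ≤ xiT L₀ * (2 * specNorm L) + xiT L₀ / 2 * specNorm L := by
        gcongr
        · exact (maxNorm_le_xiT (projTsym_mem L₀ hL.1)).trans
            (by gcongr; exact specNorm_projTsym_le L₀ L)
        · exact (maxNorm_le_specNorm _).trans ((specNorm_projTsym_sub_le_rhoSym M' L₀ L).trans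
            (by gcongr; exacts [specNorm_nonneg L, hM'.2.2]))
    _ = 5 / 2 * xiT L₀ * specNorm L := by ring

section ComponentBounds

variable (K : Matrix (Fin p ⊕ Fin h) (Fin p ⊕ Fin h) ℝ) {M' S L : Matrix (Fin p) (Fin p) ℝ}

lemma le_maxNorm_projOmega_Istar_add (hM' : Nearby (Lstar K) M') (hS : S ∈ OmegaSet (Sstar K))
    (hL : L ∈ TsetSym M') :
    alphaC K * maxNorm S - 5 / 2 * (betaC K * xiT (Lstar K)) * specNorm L ≤
      maxNorm (projOmega (Sstar K) (Istar K (S + L))) := by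
  have hmain : alphaC K * maxNorm S ≤ maxNorm (projOmega (Sstar K) (Istar K S)) :=
    (mul_le_mul_of_nonneg_right (min_le_left _ _) (maxNorm_nonneg S)).trans
      (alphaOmega_mul_le K hS)
  have hcross : maxNorm (projOmega (Sstar K) (Istar K L)) ≤
      5 / 2 * (betaC K * xiT (Lstar K)) * specNorm L :=
    calc maxNorm (projOmega (Sstar K) (Istar K L)) ≤ betaTC K * maxNorm L :=
          (maxNorm_projOmega_le _ _).trans (maxNorm_Istar_le_betaTC K hM' hL)
      _ ≤ betaC K * (5 / 2 * xiT (Lstar K) * specNorm L) :=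
          mul_le_mul (le_max_right _ _) (maxNorm_le_of_nearby hM' hL) (maxNorm_nonneg L)
            (betaC_nonneg K)
      _ = 5 / 2 * (betaC K * xiT (Lstar K)) * specNorm L := by ring
  rw [Istar_add, projOmega_add]
  linarith [maxNorm_sub_le_maxNorm_add (projOmega (Sstar K) (Istar K S))
    (projOmega (Sstar K) (Istar K L))]

lemma le_specNorm_projTsym_Istar_add (hM' : Nearby (Lstar K) M') (hS : S ∈ OmegaSet (Sstar K))
    (hL : L ∈ TsetSym M') :
    alphaC K * specNorm L - 2 * (betaC K * muOmega (Sstar K)) * maxNorm S ≤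
      specNorm (projTsym M' (Istar K (S + L))) := by
  have hmain : alphaC K * specNorm L ≤ specNorm (projTsym M' (Istar K L)) :=
    (mul_le_mul_of_nonneg_right (min_le_right _ _) (specNorm_nonneg L)).trans
      (alphaTC_mul_le K hM' hL)
  have hcross : specNorm (projTsym M' (Istar K S)) ≤
      2 * (betaC K * muOmega (Sstar K)) * maxNorm S :=
    calc specNorm (projTsym M' (Istar K S)) ≤ 2 * (betaOmega K * specNorm S) :=
          (specNorm_projTsym_le _ _).trans (by gcongr; exact specNorm_Istar_le_betaOmega K hS)
      _ ≤ 2 * (betaC K * (muOmega (Sstar K) * maxNorm S)) :=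
          mul_le_mul_of_nonneg_left (mul_le_mul (le_max_left _ _) (specNorm_le_muOmega hS)
            (specNorm_nonneg S) (betaC_nonneg K)) zero_le_two
      _ = 2 * (betaC K * muOmega (Sstar K)) * maxNorm S := by ring
  rw [Istar_add, projTsym_add, add_comm (projTsym M' (Istar K S))]
  linarith [specNorm_sub_le_specNorm_add (projTsym M' (Istar K L)) (projTsym M' (Istar K S))]

end ComponentBounds

section Arithmetic

variable {a b x m ν γ : ℝ}

lemma nonneg_and_coupling_le_of_mem_Icc (ha : 0 < a) (hb : 0 ≤ b) (hx : 0 ≤ x) (hm : 0 ≤ m)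
    (hν : ν ∈ Set.Ioc (0 : ℝ) (1 / 2))
    (hγ : γ ∈ Set.Icc (3 * b * (2 - ν) * x / (ν * a)) (ν * a / (2 * b * (2 - ν) * m))) :
    0 ≤ γ ∧ 5 * (b * x) ≤ a * γ ∧ 4 * (b * m) * γ ≤ a := by
  obtain ⟨hν0, hν1⟩ := hν
  have hνa : 0 < ν * a := mul_pos hν0 ha
  have hbx : 0 ≤ b * x := mul_nonneg hb hx
  have hbm : 0 ≤ b * m := mul_nonneg hb hm
  have hγ0 : 0 ≤ γ := (div_nonneg (by nlinarith) hνa.le).trans hγ.1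
  have hlo : 3 * b * (2 - ν) * x ≤ γ * (ν * a) := (div_le_iff₀ hνa).1 hγ.1
  refine ⟨hγ0, by nlinarith, ?_⟩
  rcases (mul_nonneg (mul_nonneg (mul_nonneg zero_le_two hb) (by linarith : (0 : ℝ) ≤ 2 - ν))
    hm).eq_or_lt with hden | hden
  · have : b * m = 0 := by nlinarith
    nlinarith
  · have hhi : γ * (2 * b * (2 - ν) * m) ≤ ν * a := (le_div_iff₀ hden).1 hγ.2
    nlinarith [mul_nonneg hbm hγ0]

lemma half_mul_max_le_of_component_bounds {s l u w : ℝ} (hb : 0 ≤ b) (hx : 0 ≤ x) (hm : 0 ≤ m)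
    (hν : ν ∈ Set.Ioc (0 : ℝ) (1 / 2))
    (hγ : γ ∈ Set.Icc (3 * b * (2 - ν) * x / (ν * a)) (ν * a / (2 * b * (2 - ν) * m)))
    (hl : 0 ≤ l) (hw : 0 ≤ w) (hxl : x = 0 → l = 0)
    (hu_ge : a * s - 5 / 2 * (b * x) * l ≤ u) (hw_ge : a * l - 2 * (b * m) * s ≤ w) :
    a / 2 * max (s / γ) l ≤ max (u / γ) w := by
  rcases le_or_gt a 0 with ha | ha
  · exact (mul_nonpos_of_nonpos_of_nonneg (by linarith) (hl.trans (le_max_right _ _))).trans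
      (hw.trans (le_max_right _ _))
  obtain ⟨hγ0, hbx, hbmγ⟩ := nonneg_and_coupling_le_of_mem_Icc ha hb hx hm hν hγ
  rcases hγ0.eq_or_lt with rfl | hγ
  · -- `γ = 0` forces `b * x = 0`, and then only the second components count (`s / 0 = 0`).
    simp only [div_zero, max_eq_right hl, max_eq_right hw]
    rcases mul_eq_zero.1 (le_antisymm (by linarith) (mul_nonneg hb hx)) with hb0 | hx0
    · subst hb0; nlinarith
    · rw [hxl hx0]; linarith
  rcases le_total (s / γ) l with hsl | hls
  · rw [max_eq_right hsl]
    have hs : s ≤ γ * l := by rwa [div_le_iff₀' hγ] at hsl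
    nlinarith [le_max_right (u / γ) w, mul_le_mul_of_nonneg_left hs (mul_nonneg hb hm)]
  · rw [max_eq_left hls]
    have hs : γ * l ≤ s := by rwa [le_div_iff₀' hγ] at hls
    have hu : a * s / 2 ≤ u := by nlinarith [mul_le_mul_of_nonneg_right hbx hl]
    calc a / 2 * (s / γ) = a * s / 2 / γ := by ring
      _ ≤ u / γ := by gcongr
      _ ≤ max (u / γ) w := le_max_left _ _

end Arithmetic

end LVGGM

theorem statement_7_general {p h : ℕ} (K : Matrix (Fin p ⊕ Fin h) (Fin p ⊕ Fin h) ℝ)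
    (ν γ : ℝ)
    (hν : ν ∈ Set.Ioc (0 : ℝ) (1 / 2))
    (hγ : γ ∈ Set.Icc
      (3 * LVGGM.betaC K * (2 - ν) * LVGGM.xiT (LVGGM.Lstar K) / (ν * LVGGM.alphaC K))
      (ν * LVGGM.alphaC K / (2 * LVGGM.betaC K * (2 - ν) * LVGGM.muOmega (LVGGM.Sstar K)))) :
    ∀ M' : Matrix (Fin p) (Fin p) ℝ, LVGGM.Nearby (LVGGM.Lstar K) M' →
      ∀ S L : Matrix (Fin p) (Fin p) ℝ,
        S ∈ LVGGM.OmegaSet (LVGGM.Sstar K) → L ∈ LVGGM.TsetSym M' →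
          LVGGM.alphaC K / 2 * LVGGM.gNorm γ S L ≤
            LVGGM.gNorm γ (LVGGM.projOmega (LVGGM.Sstar K) (LVGGM.Istar K (S + L)))
              (LVGGM.projTsym M' (LVGGM.Istar K (S + L))) := by
  open LVGGM in
  intro M' hM' S L hS hL
  have hξL : xiT (Lstar K) = 0 → specNorm L = 0 := fun hξ => by
    have hL0 : maxNorm L ≤ 0 := by simpa [hξ] using maxNorm_le_of_nearby hM' hL
    simp [(maxNorm_eq_zero L).1 (hL0.antisymm (maxNorm_nonneg L))]
  exact half_mul_max_le_of_component_bounds (betaC_nonneg K) (xiT_nonneg _) (muOmega_nonneg _)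
    hν hγ (specNorm_nonneg L) (specNorm_nonneg _) hξL
    (le_maxNorm_projOmega_Istar_add K hM' hS hL) (le_specNorm_projTsym_Istar_add K hM' hS hL)

/-- Proposition: minimum gain of the Fisher information on `Ω ⊕ T'`. -/
theorem statement_7 {p h : ℕ} (K : Matrix (Fin p ⊕ Fin h) (Fin p ⊕ Fin h) ℝ)
    (hK : K.PosDef) (ν γ : ℝ)
    (hν : ν ∈ Set.Ioc (0 : ℝ) (1 / 2))
    (hirr : LVGGM.deltaC K / LVGGM.alphaC K ≤ 1 - 2 * ν)
    (hμξ : LVGGM.muOmega (LVGGM.Sstar K) * LVGGM.xiT (LVGGM.Lstar K) ≤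
      (1 / 6) * (ν * LVGGM.alphaC K / (LVGGM.betaC K * (2 - ν))) ^ 2)
    (hγ : γ ∈ Set.Icc
      (3 * LVGGM.betaC K * (2 - ν) * LVGGM.xiT (LVGGM.Lstar K) / (ν * LVGGM.alphaC K))
      (ν * LVGGM.alphaC K / (2 * LVGGM.betaC K * (2 - ν) * LVGGM.muOmega (LVGGM.Sstar K)))) :
    ∀ M' : Matrix (Fin p) (Fin p) ℝ, LVGGM.Nearby (LVGGM.Lstar K) M' →
      ∀ S L : Matrix (Fin p) (Fin p) ℝ,
        S ∈ LVGGM.OmegaSet (LVGGM.Sstar K) → L ∈ LVGGM.TsetSym M' →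
          LVGGM.alphaC K / 2 * LVGGM.gNorm γ S L ≤
            LVGGM.gNorm γ (LVGGM.projOmega (LVGGM.Sstar K) (LVGGM.Istar K (S + L)))
              (LVGGM.projTsym M' (LVGGM.Istar K (S + L))) :=
  statement_7_general K ν γ hν hγ
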